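/- There exists a tree automaton A and a pair of downward-equivalent states p, q (D(p) = D(q)) and upward-equivalent target components such that saturation with S(≡^dw at source, ≡^up(R) at targets) changes the language: concretely, S(≡^dw, ≡^up(R)) is not good for saturation for any parameter relation R. -/

import Mathlib

/-- Trees over an alphabet: a node label and a list of children. -/
inductive TTree (Sym : Type) : Type where
  | node : Sym → List (TTree Sym) → TTree Sym

/-- A top-down tree automaton: transitions and initial states. -/
structure TDTA (Q Sym : Type) where
  delta : Set (Q × Sym × List Q)
  init : Set Q

/-- `Accepts δ q t`: there is a run of the transition relation `δ` on the
closed tree `t` rooted at state `q` (leaf rules are transitions with empty target list). -/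
inductive Accepts {Q Sym : Type} (δ : Set (Q × Sym × List Q)) : Q → TTree Sym → Prop where
  | node {q : Q} {a : Sym} {qs : List Q} {ts : List (TTree Sym)}
      (hmem : (q, a, qs) ∈ δ) (hlen : qs.length = ts.length)
      (hchild : ∀ i : Fin qs.length, Accepts δ (qs.get i) (ts.get (Fin.cast hlen i))) :
      Accepts δ q (TTree.node a ts)

/-- The downward language of a state. -/
def Dlang {Q Sym : Type} (δ : Set (Q × Sym × List Q)) (q : Q) : Set (TTree Sym) :=
  {t | Accepts δ q t}

/-- The language of a tree automaton. -/
def Lang {Q Sym : Type} (A : TDTA Q Sym) : Set (TTree Sym) :=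
  {t | ∃ q ∈ A.init, Accepts A.delta q t}

/-- The `S`-saturated automaton: add every potential transition `t'` for which
some existing transition `t ∈ δ` satisfies `t' S t`. -/
def satAut {Q Sym : Type} (A : TDTA Q Sym)
    (S : Q × Sym × List Q → Q × Sym × List Q → Prop) : TDTA Q Sym :=
  ⟨{t' | ∃ t ∈ A.delta, S t' t}, A.init⟩

/-- The pruned automaton: keep only the transitions that are maximal w.r.t. `P`. -/
def pruneAut {Q Sym : Type} (A : TDTA Q Sym)
    (P : Q × Sym × List Q → Q × Sym × List Q → Prop) : TDTA Q Sym :=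
  ⟨{t | t ∈ A.delta ∧ ∀ t' ∈ A.delta, ¬ P t t'}, A.init⟩

/-- The quotient automaton by an equivalence (setoid) on states. -/
def quotAut {Q Sym : Type} (A : TDTA Q Sym) (s : Setoid Q) : TDTA (Quotient s) Sym :=
  ⟨{t | ∃ r ∈ A.delta, t = (Quotient.mk s r.1, r.2.1, r.2.2.map (Quotient.mk s))},
   {x | ∃ q ∈ A.init, x = Quotient.mk s q}⟩

/-- `Srel Rs Rt` compares two transitions over the same symbol:
sources by `Rs`, target tuples componentwise by `Rt`. -/
def Srel {Q Sym : Type} (Rs Rt : Q → Q → Prop) :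
    Q × Sym × List Q → Q × Sym × List Q → Prop :=
  fun t' t => t'.2.1 = t.2.1 ∧ Rs t'.1 t.1 ∧ List.Forall₂ Rt t'.2.2 t.2.2

/-- Runs with open leaves: trees over `Sym ⊕ Q`, where a leaf labelled by a state
`q` (a "hole") is read exactly at state `q`.  `AcceptsH δ q t` means there is such
a (partial) run of `δ` on `t` rooted at `q`. -/
inductive AcceptsH {Q Sym : Type} (δ : Set (Q × Sym × List Q)) :
    Q → TTree (Sym ⊕ Q) → Prop where
  | hole (q : Q) : AcceptsH δ q (TTree.node (Sum.inr q) [])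
  | node {q : Q} {a : Sym} {qs : List Q} {ts : List (TTree (Sym ⊕ Q))}
      (hmem : (q, a, qs) ∈ δ) (hlen : qs.length = ts.length)
      (hchild : ∀ i : Fin qs.length, AcceptsH δ (qs.get i) (ts.get (Fin.cast hlen i))) :
      AcceptsH δ q (TTree.node (Sum.inl a) ts)

/-- One-hole contexts over `Sym ⊕ Q`. -/
inductive Ctx (Q Sym : Type) : Type where
  | hole : Ctx Q Sym
  | node : Sym → List (TTree (Sym ⊕ Q)) → Ctx Q Sym → List (TTree (Sym ⊕ Q)) → Ctx Q Sym

/-- Filling the hole of a context with a tree. -/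
def fill {Q Sym : Type} : Ctx Q Sym → TTree (Sym ⊕ Q) → TTree (Sym ⊕ Q)
  | Ctx.hole, t => t
  | Ctx.node a l C r, t => TTree.node (Sum.inl a) (l ++ fill C t :: r)

/-- A state leaf. -/
def leafQ {Q Sym : Type} (q : Q) : TTree (Sym ⊕ Q) := TTree.node (Sum.inr q) []

/-- `TreeRel R` relates two trees with identical symbol structure whose state
leaves are componentwise related by `R`. -/
inductive TreeRel {Q Sym : Type} (R : Q → Q → Prop) :
    TTree (Sym ⊕ Q) → TTree (Sym ⊕ Q) → Prop where
  | leaf {p q : Q} : R p q →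
      TreeRel R (TTree.node (Sum.inr p) []) (TTree.node (Sum.inr q) [])
  | node {a : Sym} {ts ts' : List (TTree (Sym ⊕ Q))} (hlen : ts.length = ts'.length)
      (h : ∀ i : Fin ts.length, TreeRel R (ts.get i) (ts'.get (Fin.cast hlen i))) :
      TreeRel R (TTree.node (Sum.inl a) ts) (TTree.node (Sum.inl a) ts')

/-- `CtxRel R` relates two contexts with identical symbol structure whose side
branches are `TreeRel R`-related. -/
inductive CtxRel {Q Sym : Type} (R : Q → Q → Prop) : Ctx Q Sym → Ctx Q Sym → Prop where
  | hole : CtxRel R Ctx.hole Ctx.hole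
  | node {a : Sym} {l r l' r' : List (TTree (Sym ⊕ Q))} {C C' : Ctx Q Sym}
      (hl : List.Forall₂ (TreeRel R) l l') (hC : CtxRel R C C')
      (hr : List.Forall₂ (TreeRel R) r r') :
      CtxRel R (Ctx.node a l C r) (Ctx.node a l' C' r')

/-- A tree (with open state leaves) is accepted by the automaton. -/
def AccLangH {Q Sym : Type} (A : TDTA Q Sym) (t : TTree (Sym ⊕ Q)) : Prop :=
  ∃ i ∈ A.init, AcceptsH A.delta i t

/-- Upward trace inclusion parameterized by a relation `R` on side-branch states:
every accepting run placing `p` at the hole of a context can be replaced by an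
accepting run placing `q` at the hole of an `R`-related context. -/
def upLe {Q Sym : Type} (A : TDTA Q Sym) (R : Q → Q → Prop) (p q : Q) : Prop :=
  ∀ C : Ctx Q Sym, AccLangH A (fill C (leafQ p)) →
    ∃ C' : Ctx Q Sym, CtxRel R C C' ∧ AccLangH A (fill C' (leafQ q))

/-- Upward trace equivalence parameterized by `R`. -/
def upEq {Q Sym : Type} (A : TDTA Q Sym) (R : Q → Q → Prop) (p q : Q) : Prop :=
  upLe A R p q ∧ upLe A R q p

/-- Upward trace inclusion parameterized by identity: every accepting run using
`p` at an open leaf can be replaced by one using `q` there, agreeing with the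
original run on all other (open) leaves. -/
def upLeId {Q Sym : Type} (A : TDTA Q Sym) (p q : Q) : Prop :=
  ∀ C : Ctx Q Sym, AccLangH A (fill C (leafQ p)) → AccLangH A (fill C (leafQ q))

/-! The counterexample is a word automaton accepting `ab` and `aab`: `i -a→ q₁ -a→ q₂ -b→` and
`i -a→ q -b→`, together with an unreachable branch `p -a→ q -b→`. Since `q₁` and `p` both accept
exactly `ab`, and `q₁`, `q` both occur only as the child of the root, saturation copies
`p -a→ q` to the loop `q₁ -a→ q₁`, and the automaton then accepts `aaab`. This works for every
`R` because contexts in a word automaton have no side branches to compare. -/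

section Runs

variable {Q Sym : Type} {δ δ' : Set (Q × Sym × List Q)}

theorem List.exists_of_forall₂_append_cons {α β : Type} {R : α → β → Prop} {u : List α}
    {l r : List β} {b : β} (h : List.Forall₂ R u (l ++ b :: r)) :
    ∃ ul x ur, u = ul ++ x :: ur ∧ List.Forall₂ R ul l ∧ R x b ∧ List.Forall₂ R ur r := by
  induction l generalizing u with
  | nil =>
    obtain ⟨x, ur, hx, hr, rfl⟩ := List.forall₂_cons_right_iff.1 h
    exact ⟨[], x, ur, rfl, .nil, hx, hr⟩
  | cons c l ih =>
    obtain ⟨y, u', hy, hu', rfl⟩ := List.forall₂_cons_right_iff.1 h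
    obtain ⟨ul, x, ur, rfl, hl, hx, hr⟩ := ih hu'
    exact ⟨y :: ul, x, ur, rfl, .cons hy hl, hx, hr⟩

theorem accepts_node_iff {s : Q} {a : Sym} {ts : List (TTree Sym)} :
    Accepts δ s (.node a ts) ↔ ∃ qs, (s, a, qs) ∈ δ ∧ List.Forall₂ (Accepts δ) qs ts := by
  constructor
  · rintro ⟨hmem, hlen, hchild⟩
    exact ⟨_, hmem, List.forall₂_iff_get.2 ⟨hlen, fun i h _ => hchild ⟨i, h⟩⟩⟩
  · rintro ⟨qs, hmem, h⟩
    exact .node hmem h.length_eq fun i => h.get i.2 _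

theorem accepts_unary_iff {s : Q} {a : Sym} {t : TTree Sym} :
    Accepts δ s (.node a [t]) ↔ ∃ v, (s, a, [v]) ∈ δ ∧ Accepts δ v t := by
  simp [accepts_node_iff, List.forall₂_cons_right_iff]

theorem accepts_leaf_iff {s : Q} {a : Sym} : Accepts δ s (.node a []) ↔ (s, a, []) ∈ δ := by
  simp [accepts_node_iff]

theorem Accepts.mono (hδ : δ ⊆ δ') {s : Q} {t : TTree Sym} (h : Accepts δ s t) :
    Accepts δ' s t := by
  induction h with
  | @node _ _ _ _ hmem hlen _ ih => exact .node (hδ hmem) hlen ih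

theorem acceptsH_node_iff {s : Q} {a : Sym} {ts : List (TTree (Sym ⊕ Q))} :
    AcceptsH δ s (.node (.inl a) ts) ↔ ∃ qs, (s, a, qs) ∈ δ ∧ List.Forall₂ (AcceptsH δ) qs ts := by
  constructor
  · rintro (_ | ⟨hmem, hlen, hchild⟩)
    exact ⟨_, hmem, List.forall₂_iff_get.2 ⟨hlen, fun i h _ => hchild ⟨i, h⟩⟩⟩
  · rintro ⟨qs, hmem, h⟩
    exact .node hmem h.length_eq fun i => h.get i.2 _

theorem acceptsH_leafQ_iff {s p : Q} : AcceptsH δ s (leafQ (Sym := Sym) p) ↔ s = p := by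
  constructor
  · rintro ⟨⟩
    rfl
  · rintro rfl
    exact .hole s

end Runs

section Contexts

variable {Q Sym : Type}

theorem acceptsH_fill_swap {δ : Set (Q × Sym × List Q)} {U : Set Q}
    (hU : ∀ s ∈ U, ∀ a qs, (s, a, qs) ∈ δ → ∀ v ∈ qs, v ∈ U) {p q : Q}
    (hswap : ∀ s ∈ U, ∀ a l r, (s, a, l ++ p :: r) ∈ δ → (s, a, l ++ q :: r) ∈ δ) :
    ∀ {C : Ctx Q Sym} {s : Q}, s ∈ U → C ≠ .hole →
      AcceptsH δ s (fill C (leafQ p)) → AcceptsH δ s (fill C (leafQ q))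
  | .hole, _, _, hC, _ => absurd rfl hC
  | .node a l C r, s, hs, _, h => by
    obtain ⟨qs, hmem, hF⟩ := acceptsH_node_iff.1 h
    obtain ⟨ql, x, qr, rfl, hl, hx, hr⟩ := List.exists_of_forall₂_append_cons hF
    rw [fill, acceptsH_node_iff]
    by_cases hC : C = .hole
    · subst hC
      obtain rfl := acceptsH_leafQ_iff.1 hx
      exact ⟨_, hswap s hs _ _ _ hmem, List.rel_append hl (.cons (.hole q) hr)⟩
    · have hxU : x ∈ U := hU s hs a _ hmem x (by simp)
      exact ⟨_, hmem, List.rel_append hl (.cons (acceptsH_fill_swap hU hswap hxU hC hx) hr)⟩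

theorem upLeId_of_swap {A : TDTA Q Sym} {U : Set Q} (hinitU : A.init ⊆ U)
    (hU : ∀ s ∈ U, ∀ a qs, (s, a, qs) ∈ A.delta → ∀ v ∈ qs, v ∈ U) {p q : Q}
    (hinit : p ∈ A.init → q ∈ A.init)
    (hswap : ∀ s ∈ U, ∀ a l r, (s, a, l ++ p :: r) ∈ A.delta → (s, a, l ++ q :: r) ∈ A.delta) :
    upLeId A p q := by
  rintro C ⟨s, hs, h⟩
  by_cases hC : C = .hole
  · subst hC
    obtain rfl := acceptsH_leafQ_iff.1 h
    exact ⟨q, hinit hs, .hole q⟩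
  · exact ⟨s, hs, acceptsH_fill_swap hU hswap (hinitU hs) hC h⟩

theorem ctxRel_self_of_acceptsH_fill {δ : Set (Q × Sym × List Q)}
    (hδ : ∀ r ∈ δ, r.2.2.length ≤ 1) (R : Q → Q → Prop) :
    ∀ {C : Ctx Q Sym} {s : Q} {t : TTree (Sym ⊕ Q)}, AcceptsH δ s (fill C t) → CtxRel R C C
  | .hole, _, _, _ => .hole
  | .node a l C r, s, t, h => by
    obtain ⟨qs, hmem, hF⟩ := acceptsH_node_iff.1 h
    obtain ⟨ql, x, qr, rfl, hl, hx, hr⟩ := List.exists_of_forall₂_append_cons hF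
    have hlen := hδ _ hmem
    simp only [List.length_append, List.length_cons] at hlen
    obtain rfl := List.eq_nil_of_length_eq_zero (l := ql) (by omega)
    obtain rfl := List.eq_nil_of_length_eq_zero (l := qr) (by omega)
    obtain rfl := List.forall₂_nil_left_iff.1 hl
    obtain rfl := List.forall₂_nil_left_iff.1 hr
    exact .node .nil (ctxRel_self_of_acceptsH_fill hδ R hx) .nil

theorem upLe_of_upLeId {A : TDTA Q Sym} (hA : ∀ r ∈ A.delta, r.2.2.length ≤ 1)
    (R : Q → Q → Prop) {p q : Q} (h : upLeId A p q) : upLe A R p q :=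
  fun C hC => ⟨C, ctxRel_self_of_acceptsH_fill hA R hC.choose_spec.2, h C hC⟩

theorem upEq_of_upLeId {A : TDTA Q Sym} (hA : ∀ r ∈ A.delta, r.2.2.length ≤ 1)
    (R : Q → Q → Prop) {p q : Q} (hpq : upLeId A p q) (hqp : upLeId A q p) : upEq A R p q :=
  ⟨upLe_of_upLeId hA R hpq, upLe_of_upLeId hA R hqp⟩

theorem upEq_refl_of_unary {A : TDTA Q Sym} (hA : ∀ r ∈ A.delta, r.2.2.length ≤ 1)
    (R : Q → Q → Prop) (p : Q) : upEq A R p p :=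
  upEq_of_upLeId hA R (fun _ h => h) (fun _ h => h)

end Contexts

section Downward

variable {Q Sym : Type} {δ : Set (Q × Sym × List Q)}

theorem forall₂_accepts_of_dlang_subset {qs qs' : List Q} {ts : List (TTree Sym)}
    (hsub : List.Forall₂ (fun v v' => Dlang δ v ⊆ Dlang δ v') qs qs')
    (h : List.Forall₂ (Accepts δ) qs ts) : List.Forall₂ (Accepts δ) qs' ts := by
  induction hsub generalizing ts with
  | nil => exact h
  | cons hv _ ih =>
    obtain ⟨t, ts', ht, hts, rfl⟩ := List.forall₂_cons_left_iff.1 h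
    exact .cons (hv ht) (ih hts)

theorem dlang_subset_of_forall₂ {u u' : Q}
    (h : ∀ a qs, (u, a, qs) ∈ δ →
      ∃ qs', (u', a, qs') ∈ δ ∧ List.Forall₂ (fun v v' => Dlang δ v ⊆ Dlang δ v') qs qs') :
    Dlang δ u ⊆ Dlang (Sym := Sym) δ u' := by
  rintro ⟨a, ts⟩ ht
  obtain ⟨qs, hmem, hts⟩ := accepts_node_iff.1 ht
  obtain ⟨qs', hmem', hsub⟩ := h a qs hmem
  exact accepts_node_iff.2 ⟨qs', hmem', forall₂_accepts_of_dlang_subset hsub hts⟩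

end Downward

theorem delta_subset_satAut_Srel {Q Sym : Type} {A : TDTA Q Sym} {Rs Rt : Q → Q → Prop}
    (hRs : ∀ s, Rs s s) (hRt : ∀ s, Rt s s) : A.delta ⊆ (satAut A (Srel Rs Rt)).delta :=
  fun t ht => ⟨t, ht, rfl, hRs _, List.forall₂_same.2 fun x _ => hRt x⟩

namespace SaturationCounterexample

inductive State | i | q₁ | q₂ | p | q

inductive Letter | a | b

open State Letter

def δ : Set (State × Letter × List State) :=
  {(i, a, [q₁]), (q₁, a, [q₂]), (q₂, b, []), (i, a, [q]), (q, b, []), (p, a, [q])}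

def A : TDTA State Letter := ⟨δ, {i}⟩

def aPowB : ℕ → TTree Letter
  | 0 => .node b []
  | n + 1 => .node a [aPowB n]

@[simp]
theorem mem_δ {s : State} {c : Letter} {qs : List State} :
    (s, c, qs) ∈ δ ↔ s = i ∧ c = a ∧ qs = [q₁] ∨ s = q₁ ∧ c = a ∧ qs = [q₂] ∨
      s = q₂ ∧ c = b ∧ qs = [] ∨ s = i ∧ c = a ∧ qs = [q] ∨ s = q ∧ c = b ∧ qs = [] ∨
      s = p ∧ c = a ∧ qs = [q] := by
  simp [δ]

theorem arity_le_one : ∀ r ∈ A.delta, r.2.2.length ≤ 1 := by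
  rintro ⟨s, c, qs⟩ h
  simp only [A, mem_δ] at h
  grind

theorem dlang_q₁_eq_p : Dlang δ q₁ = Dlang δ p := by
  have hq₂q : Dlang δ q₂ ⊆ Dlang (Sym := Letter) δ q := dlang_subset_of_forall₂ (by simp)
  have hqq₂ : Dlang δ q ⊆ Dlang (Sym := Letter) δ q₂ := dlang_subset_of_forall₂ (by simp)
  exact (dlang_subset_of_forall₂ (by simp [hq₂q])).antisymm
    (dlang_subset_of_forall₂ (by simp [hqq₂]))

theorem ne_p_of_mem {s : State} {c : Letter} {qs : List State} (h : (s, c, qs) ∈ A.delta) :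
    ∀ v ∈ qs, v ≠ p := by
  simp only [A, mem_δ] at h
  grind

theorem upEq_q₁_q (R : State → State → Prop) : upEq A R q₁ q := by
  -- `p -a→ q` has no counterpart `p -a→ q₁`, but `p` is unreachable.
  have hinitU : A.init ⊆ {s | s ≠ p} := by simp [A]
  have hU : ∀ s ∈ {s | s ≠ p}, ∀ c qs, (s, c, qs) ∈ A.delta → ∀ v ∈ qs, v ∈ {s | s ≠ p} :=
    fun _ _ _ _ h => ne_p_of_mem h
  refine upEq_of_upLeId arity_le_one R (upLeId_of_swap hinitU hU (by simp [A]) ?_)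
    (upLeId_of_swap hinitU hU (by simp [A]) ?_)
  all_goals
    intro s hs c l r h
    simp_all [A, List.append_eq_cons_iff]

theorem aPowB_three_not_mem_lang : aPowB 3 ∉ Lang A := by
  simp [Lang, A, aPowB, accepts_unary_iff, accepts_leaf_iff]

theorem aPowB_three_mem_lang_satAut (R : State → State → Prop) :
    aPowB 3 ∈ Lang (satAut A (Srel (fun u v => Dlang A.delta u = Dlang A.delta v)
      (fun u v => upEq A R u v))) := by
  set S := Srel (fun u v => Dlang A.delta u = Dlang A.delta v) (fun u v => upEq A R u v)
  have hsub : A.delta ⊆ (satAut A S).delta :=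
    delta_subset_satAut_Srel (fun _ => rfl) (upEq_refl_of_unary arity_le_one R)
  have hloop : (q₁, a, [q₁]) ∈ (satAut A S).delta :=
    ⟨(p, a, [q]), by simp [A], rfl, dlang_q₁_eq_p, .cons (upEq_q₁_q R) .nil⟩
  have hq₁ : Accepts A.delta q₁ (aPowB 1) := by
    simp [A, aPowB, accepts_unary_iff, accepts_leaf_iff]
  exact ⟨i, rfl, accepts_unary_iff.2 ⟨q₁, hsub (by simp [A]),
    accepts_unary_iff.2 ⟨q₁, hloop, hq₁.mono hsub⟩⟩⟩

end SaturationCounterexample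

/-- `S(≡dw, ≡up(R))` is not GFS for any parameter relation `R`:
there is an automaton on which this saturation changes the language, for
every `R`. -/
theorem stmt11 :
    ∃ (Q Sym : Type) (A : TDTA Q Sym), ∀ R : Q → Q → Prop,
      Lang (satAut A
        (Srel (fun p q => Dlang A.delta p = Dlang A.delta q)
              (fun p q => upEq A R p q))) ≠ Lang A := by
  refine ⟨_, _, SaturationCounterexample.A, fun R hEq => ?_⟩
  exact SaturationCounterexample.aPowB_three_not_mem_lang
    (hEq ▸ SaturationCounterexample.aPowB_three_mem_lang_satAut R)
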